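/- arXiv:1208.0398 — 2 statements merged into one kernel-verified Lean document; each statement's English description precedes it below -/
import Mathlib

section
/- Let G be a tournament that is both T_5-free and U_5-free, let v ∈ V(G), and suppose {x, y, z} and {x′, y, z} are cyclic triangles in V(G)\{v} with x ≠ x′ and x → x′. If at least one of x, y, z is a successor of v, then at least one of x′, y, z is a successor of v. -/
/-- A tournament: irreflexive, and between any two distinct vertices exactly one edge. -/
def IsTournament {V : Type*} (r : V → V → Prop) : Prop :=
  (∀ v, ¬ r v v) ∧ ∀ u v : V, u ≠ v → (r u v ↔ ¬ r v u)

/-- A homogeneous set. -/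
def IsHomog {V : Type*} (r : V → V → Prop) (X : Set V) : Prop :=
  ∀ v ∉ X, (∀ x ∈ X, r v x) ∨ (∀ x ∈ X, r x v)

/-- A prime tournament: every homogeneous set is trivial. -/
def IsPrime {V : Type*} (r : V → V → Prop) : Prop :=
  ∀ X : Set V, IsHomog r X → X.Subsingleton ∨ X = Set.univ

/-- A set of vertices is transitive: it induces no cyclic triangle. -/
def IsTransOn {V : Type*} (r : V → V → Prop) (X : Set V) : Prop :=
  ∀ a ∈ X, ∀ b ∈ X, ∀ c ∈ X, ¬ (r a b ∧ r b c ∧ r c a)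

/-- T_5: vertices 0,...,4 (v_k = k-1), with i → j iff j - i ≡ 1 or 2 (mod 5). -/
def T5 (i j : Fin 5) : Prop :=
  (j.val + 5 - i.val) % 5 = 1 ∨ (j.val + 5 - i.val) % 5 = 2

/-- U_5: obtained from T_5 by reversing the edge between v_1 and v_2
(indices 0 and 1), so that v_2 → v_1. -/
def U5 (i j : Fin 5) : Prop :=
  if i = 0 ∧ j = 1 then False else if i = 1 ∧ j = 0 then True else T5 i j

/-- G (given by relation r) contains a copy of the tournament given by s. -/
def Copy {V W : Type*} (r : V → V → Prop) (s : W → W → Prop) : Prop :=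
  ∃ f : W → V, Function.Injective f ∧ ∀ a b, s a b → r (f a) (f b)

/-- {a,b,c} is a cyclic triangle (in one of the two cyclic orientations). -/
def Cyc3 {V : Type*} (r : V → V → Prop) (a b c : V) : Prop :=
  (r a b ∧ r b c ∧ r c a) ∨ (r a c ∧ r c b ∧ r b a)

/-!
Suppose v → x but x', y, z → v. Both triangles are oriented the same way around the edge
between y and z; say x → y → z → x and x' → y → z → x'. Then v, z, x, x', y induce U_5
(v, z in the roles of v_1, v_2).
-/

section Tournament

variable {V : Type*} {r : V → V → Prop}

theorem IsTournament.irrefl (hT : IsTournament r) (a : V) : ¬ r a a :=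
  hT.1 a

theorem IsTournament.asymm (hT : IsTournament r) {a b : V} (hab : r a b) : ¬ r b a := by
  rcases eq_or_ne a b with rfl | hne
  · exact hT.irrefl a
  · exact (hT.2 a b hne).mp hab

theorem IsTournament.rel_of_not_rel (hT : IsTournament r) {a b : V} (hab : a ≠ b)
    (h : ¬ r a b) : r b a :=
  (hT.2 b a hab.symm).mpr h

theorem IsTournament.rel_or_rel (hT : IsTournament r) {a b : V} (hab : a ≠ b) :
    r a b ∨ r b a :=
  or_iff_not_imp_left.mpr (hT.rel_of_not_rel hab)

end Tournament

section Cyc3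

variable {V : Type*} {r : V → V → Prop} {a b c : V}

theorem Cyc3.swap (h : Cyc3 r a b c) : Cyc3 r a c b := by
  unfold Cyc3 at h ⊢
  tauto

theorem Cyc3.ne (hirr : ∀ v, ¬ r v v) (h : Cyc3 r a b c) : b ≠ c := by
  rintro rfl
  rcases h with ⟨-, hbb, -⟩ | ⟨-, hbb, -⟩ <;> exact hirr b hbb

theorem Cyc3.rel_of_rel (hT : IsTournament r) (h : Cyc3 r a b c) (hbc : r b c) :
    r a b ∧ r c a := by
  rcases h with ⟨hab, -, hca⟩ | ⟨-, hcb, -⟩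
  · exact ⟨hab, hca⟩
  · exact absurd hcb (hT.asymm hbc)

end Cyc3

/-- Distinct vertices of `s` are joined by an edge, so a homomorphism into an irreflexive
relation cannot identify them. -/
theorem copy_of_hom {V W : Type*} {r : V → V → Prop} {s : W → W → Prop}
    (hirr : ∀ v, ¬ r v v) (htot : ∀ i j, i ≠ j → s i j ∨ s j i)
    (f : W → V) (hf : ∀ a b, s a b → r (f a) (f b)) : Copy r s := by
  refine ⟨f, fun i j hij => ?_, hf⟩
  by_contra hne
  rcases htot i j hne with h | h
  · exact hirr (f j) (hij ▸ hf i j h)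
  · exact hirr (f j) (hij ▸ hf j i h)

theorem U5_total : ∀ i j : Fin 5, i ≠ j → U5 i j ∨ U5 j i := by
  unfold U5 T5
  decide

theorem copy_U5_of_edges {V : Type*} {r : V → V → Prop} (hirr : ∀ v, ¬ r v v)
    {a b c d e : V}
    (e02 : r a c) (e10 : r b a) (e12 : r b c) (e13 : r b d) (e23 : r c d)
    (e24 : r c e) (e34 : r d e) (e30 : r d a) (e40 : r e a) (e41 : r e b) :
    Copy r U5 := by
  refine copy_of_hom hirr U5_total ![a, b, c, d, e] fun i j hij => ?_
  fin_cases i <;> fin_cases j <;> simp [U5, T5] at hij ⊢ <;> assumption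

theorem copy_U5_of_cyc3_pair {V : Type*} {r : V → V → Prop} (hT : IsTournament r)
    {v x x' y z : V} (hc1 : Cyc3 r x y z) (hc2 : Cyc3 r x' y z) (hxx' : r x x')
    (hvx : r v x) (hx'v : r x' v) (hyv : r y v) (hzv : r z v) : Copy r U5 := by
  rcases hT.rel_or_rel (hc1.ne hT.irrefl) with hyz | hzy
  · obtain ⟨hxy, hzx⟩ := hc1.rel_of_rel hT hyz
    obtain ⟨hx'y, hzx'⟩ := hc2.rel_of_rel hT hyz
    exact copy_U5_of_edges hT.irrefl hvx hzv hzx hzx' hxx' hxy hx'y hx'v hyv hyz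
  · obtain ⟨hxz, hyx⟩ := hc1.swap.rel_of_rel hT hzy
    obtain ⟨hx'z, hyx'⟩ := hc2.swap.rel_of_rel hT hzy
    exact copy_U5_of_edges hT.irrefl hvx hyv hyx hyx' hxx' hxz hx'z hx'v hzv hzy

theorem successor_propagates_general {V : Type*} (r : V → V → Prop)
    (hT : IsTournament r) (hU5 : ¬ Copy r U5)
    (v x x' y z : V)
    (hx'v : x' ≠ v) (hyv : y ≠ v) (hzv : z ≠ v)
    (hc1 : Cyc3 r x y z) (hc2 : Cyc3 r x' y z)
    (hxe : r x x')
    (hsucc : r v x ∨ r v y ∨ r v z) :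
    r v x' ∨ r v y ∨ r v z := by
  by_contra! hnot
  obtain ⟨hvx', hvy, hvz⟩ := hnot
  have hvx : r v x := by tauto
  exact hU5 (copy_U5_of_cyc3_pair hT hc1 hc2 hxe hvx
    (hT.rel_of_not_rel hx'v.symm hvx') (hT.rel_of_not_rel hyv.symm hvy)
    (hT.rel_of_not_rel hzv.symm hvz))

/-- Proposition (c): with cyclic triangles {x,y,z} and {x',y,z} and x → x',
if some vertex of {x,y,z} is a successor of v then so is some vertex of
{x',y,z}. -/
theorem successor_propagates {V : Type*} (r : V → V → Prop)
    (hT : IsTournament r) (hT5 : ¬ Copy r T5) (hU5 : ¬ Copy r U5)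
    (v x x' y z : V)
    (hxv : x ≠ v) (hx'v : x' ≠ v) (hyv : y ≠ v) (hzv : z ≠ v) (hxx' : x ≠ x')
    (hc1 : Cyc3 r x y z) (hc2 : Cyc3 r x' y z)
    (hxe : r x x')
    (hsucc : r v x ∨ r v y ∨ r v z) :
    r v x' ∨ r v y ∨ r v z :=
  successor_propagates_general r hT hU5 v x x' y z hx'v hyv hzv hc1 hc2 hxe hsucc
end

section
/- If the vertex set of a tournament G can be partitioned into sets X, Y, Z such that X ∪ Y, Y ∪ Z, and Z ∪ X are all transitive, then G is T_5-free and U_5-free. -/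
/-!
Since `X`, `Y`, `Z` cover the vertices, the sets `(X ∪ Y)ᶜ`, `(Y ∪ Z)ᶜ`, `(Z ∪ X)ᶜ` are pairwise
disjoint, so by pigeonhole one of them meets the image of five vertices at most once. The other
four vertices then lie in one of the transitive pairwise unions, which is
impossible for `T5` and `U5`: each of them still has a cyclic triangle after deleting any vertex.
-/

theorem IsTransOn.mono {V : Type*} {r : V → V → Prop} {S T : Set V} (hT : IsTransOn r T)
    (hST : S ⊆ T) : IsTransOn r S :=
  fun _ ha _ hb _ hc => hT _ (hST ha) _ (hST hb) _ (hST hc)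

theorem IsTransOn.preimage {V W : Type*} {r : V → V → Prop} {s : W → W → Prop} {S : Set V}
    (hS : IsTransOn r S) {f : W → V} (hf : ∀ a b, s a b → r (f a) (f b)) :
    IsTransOn s (f ⁻¹' S) :=
  fun _ ha _ hb _ hc ⟨hab, hbc, hca⟩ => hS _ ha _ hb _ hc ⟨hf _ _ hab, hf _ _ hbc, hf _ _ hca⟩

theorem disjoint_compl_union_of_union_eq_univ {V : Type*} {A B C : Set V}
    (h : A ∪ B ∪ C = Set.univ) : Disjoint (A ∪ B)ᶜ (B ∪ C)ᶜ := by
  refine Set.disjoint_left.2 fun x hAB hBC => ?_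
  have hx : x ∈ A ∪ B ∪ C := h ▸ Set.mem_univ x
  simp only [Set.mem_compl_iff, Set.mem_union] at hAB hBC hx
  tauto

theorem exists_compl_singleton_subset_of_ncard_compl_le_one {V W : Type*} [Finite W]
    [Nonempty W] {f : W → V} {S : Set V} (h : (f ⁻¹' Sᶜ).ncard ≤ 1) :
    ∃ i, {i}ᶜ ⊆ f ⁻¹' S := by
  obtain ⟨i, hi⟩ := (Set.ncard_le_one_iff_subset_singleton (s := f ⁻¹' Sᶜ)).mp h
  exact ⟨i, fun j hj => not_not.mp fun hjS => hj (hi hjS)⟩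

theorem exists_compl_singleton_subset_preimage_union {V W : Type*} [Finite W] [Nonempty W]
    (hW : Nat.card W ≤ 5) {X Y Z : Set V} (hcover : X ∪ Y ∪ Z = Set.univ) (f : W → V) :
    ∃ i, {i}ᶜ ⊆ f ⁻¹' (X ∪ Y) ∨ {i}ᶜ ⊆ f ⁻¹' (Y ∪ Z) ∨ {i}ᶜ ⊆ f ⁻¹' (Z ∪ X) := by
  have hYZX : Y ∪ Z ∪ X = Set.univ := by rw [← hcover]; ac_rfl
  have hZXY : Z ∪ X ∪ Y = Set.univ := by rw [← hcover]; ac_rfl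
  have hXY_YZ := (disjoint_compl_union_of_union_eq_univ hcover).preimage f
  have hZX_rest : Disjoint (f ⁻¹' (X ∪ Y)ᶜ ∪ f ⁻¹' (Y ∪ Z)ᶜ) (f ⁻¹' (Z ∪ X)ᶜ) :=
    Disjoint.union_left ((disjoint_compl_union_of_union_eq_univ hZXY).symm.preimage f)
      ((disjoint_compl_union_of_union_eq_univ hYZX).preimage f)
  have hsum : (f ⁻¹' (X ∪ Y)ᶜ).ncard + (f ⁻¹' (Y ∪ Z)ᶜ).ncard + (f ⁻¹' (Z ∪ X)ᶜ).ncard ≤ 5 := by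
    rw [← Set.ncard_union_eq hXY_YZ, ← Set.ncard_union_eq hZX_rest]
    exact (Set.ncard_le_card _).trans hW
  rcases (by omega : (f ⁻¹' (X ∪ Y)ᶜ).ncard ≤ 1 ∨ (f ⁻¹' (Y ∪ Z)ᶜ).ncard ≤ 1 ∨
      (f ⁻¹' (Z ∪ X)ᶜ).ncard ≤ 1) with h | h | h
  · obtain ⟨i, hi⟩ := exists_compl_singleton_subset_of_ncard_compl_le_one h
    exact ⟨i, Or.inl hi⟩
  · obtain ⟨i, hi⟩ := exists_compl_singleton_subset_of_ncard_compl_le_one h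
    exact ⟨i, Or.inr (Or.inl hi)⟩
  · obtain ⟨i, hi⟩ := exists_compl_singleton_subset_of_ncard_compl_le_one h
    exact ⟨i, Or.inr (Or.inr hi)⟩

theorem not_copy_of_forall_not_isTransOn_compl_singleton {V W : Type*} {r : V → V → Prop}
    {X Y Z : Set V} (hcover : X ∪ Y ∪ Z = Set.univ)
    (tXY : IsTransOn r (X ∪ Y)) (tYZ : IsTransOn r (Y ∪ Z)) (tZX : IsTransOn r (Z ∪ X))
    [Finite W] [Nonempty W] (hW : Nat.card W ≤ 5) {s : W → W → Prop}
    (hs : ∀ i, ¬ IsTransOn s {i}ᶜ) : ¬ Copy r s := by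
  rintro ⟨f, -, hf⟩
  obtain ⟨i, h | h | h⟩ := exists_compl_singleton_subset_preimage_union hW hcover f
  exacts [hs i ((tXY.preimage hf).mono h), hs i ((tYZ.preimage hf).mono h),
    hs i ((tZX.preimage hf).mono h)]

theorem T5_not_isTransOn_compl_singleton (i : Fin 5) : ¬ IsTransOn T5 {i}ᶜ := by
  simp only [IsTransOn, T5, Set.mem_compl_singleton_iff]
  revert i
  decide

theorem U5_not_isTransOn_compl_singleton (i : Fin 5) : ¬ IsTransOn U5 {i}ᶜ := by
  simp only [IsTransOn, U5, T5, Set.mem_compl_singleton_iff]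
  revert i
  decide

theorem partition_implies_free_general {V : Type*} (r : V → V → Prop)
    (X Y Z : Set V) (hcover : X ∪ Y ∪ Z = Set.univ)
    (tXY : IsTransOn r (X ∪ Y)) (tYZ : IsTransOn r (Y ∪ Z)) (tZX : IsTransOn r (Z ∪ X)) :
    ¬ Copy r T5 ∧ ¬ Copy r U5 := by
  have hcard : Nat.card (Fin 5) ≤ 5 := by simp
  exact ⟨not_copy_of_forall_not_isTransOn_compl_singleton hcover tXY tYZ tZX hcard
      T5_not_isTransOn_compl_singleton,
    not_copy_of_forall_not_isTransOn_compl_singleton hcover tXY tYZ tZX hcard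
      U5_not_isTransOn_compl_singleton⟩

/-- If V(G) is partitioned into X, Y, Z with X ∪ Y, Y ∪ Z, Z ∪ X transitive,
then G is T_5-free and U_5-free. -/
theorem partition_implies_free {V : Type*} (r : V → V → Prop)
    (hT : IsTournament r)
    (X Y Z : Set V) (hcover : X ∪ Y ∪ Z = Set.univ)
    (hXY : Disjoint X Y) (hYZ : Disjoint Y Z) (hZX : Disjoint Z X)
    (tXY : IsTransOn r (X ∪ Y)) (tYZ : IsTransOn r (Y ∪ Z)) (tZX : IsTransOn r (Z ∪ X)) :
    ¬ Copy r T5 ∧ ¬ Copy r U5 :=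
  partition_implies_free_general r X Y Z hcover tXY tYZ tZX
end
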